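/- Let γ : [0, ℓ] → ℝ⁴ be a C² curve parameterized by arc length (so |γ'(t)| = 1 for all t) with γ(0) = γ(ℓ) = 0. Then ∫₀^ℓ |γ''(t)| dt ≥ 1. -/

import Mathlib

/-!
Integrating `γ' - γ'(a)` over a closed loop `[a, b]` gives `-(b - a) γ'(a)`, since `∫ γ' = 0`.
Every integrand has norm at most `∫ ‖γ''‖`, because the tangent can move that far at most; hence
`(b - a) ‖γ'(a)‖ ≤ (b - a) ∫ ‖γ''‖`, and a unit tangent gives `∫ ‖γ''‖ ≥ 1`.
-/

open intervalIntegral Set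

variable {E : Type*} [NormedAddCommGroup E] [NormedSpace ℝ E] [CompleteSpace E]

theorem ContDiff.norm_sub_le_integral_norm_deriv {f : ℝ → E} (hf : ContDiff ℝ 1 f)
    {a b t : ℝ} (ht : t ∈ Icc a b) :
    ‖f t - f a‖ ≤ ∫ s in a..b, ‖deriv f s‖ := by
  have hdiff := hf.differentiable one_ne_zero
  have hcont := hf.continuous_deriv le_rfl
  calc ‖f t - f a‖ = ‖∫ s in a..t, deriv f s‖ := by
        rw [integral_deriv_eq_sub (fun x _ => hdiff x) (hcont.intervalIntegrable a t)]
    _ ≤ ∫ s in a..t, ‖deriv f s‖ := norm_integral_le_integral_norm ht.1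
    _ ≤ ∫ s in a..b, ‖deriv f s‖ :=
        integral_mono_interval le_rfl ht.1 ht.2 (.of_forall fun _ => norm_nonneg _)
          (hcont.norm.intervalIntegrable a b)

theorem ContDiff.norm_deriv_le_integral_norm_deriv_deriv {γ : ℝ → E} (hγ : ContDiff ℝ 2 γ)
    {a b : ℝ} (hab : a < b) (hloop : γ a = γ b) :
    ‖deriv γ a‖ ≤ ∫ t in a..b, ‖deriv (deriv γ) t‖ := by
  have hγ' : ContDiff ℝ 1 (deriv γ) := hγ.iterate_deriv' 1 1
  have hcont := hγ'.continuous
  have hintegral : ∫ t in a..b, (deriv γ t - deriv γ a) = -((b - a) • deriv γ a) := by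
    rw [integral_sub (hcont.intervalIntegrable a b) intervalIntegrable_const,
      integral_deriv_eq_sub (fun x _ => (hγ.differentiable two_ne_zero) x)
        (hcont.intervalIntegrable a b), integral_const, hloop, sub_self, zero_sub]
  have hbound : (b - a) * ‖deriv γ a‖ ≤ (b - a) * ∫ t in a..b, ‖deriv (deriv γ) t‖ :=
    calc (b - a) * ‖deriv γ a‖ = ‖∫ t in a..b, (deriv γ t - deriv γ a)‖ := by
          rw [hintegral, norm_neg, norm_smul, Real.norm_of_nonneg (sub_nonneg.2 hab.le)]
      _ ≤ (∫ t in a..b, ‖deriv (deriv γ) t‖) * |b - a| :=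
          norm_integral_le_of_norm_le_const fun t ht =>
            hγ'.norm_sub_le_integral_norm_deriv (Ioc_subset_Icc_self (uIoc_of_le hab.le ▸ ht))
      _ = (b - a) * ∫ t in a..b, ‖deriv (deriv γ) t‖ := by
          rw [abs_of_pos (sub_pos.2 hab), mul_comm]
  exact le_of_mul_le_mul_left hbound (sub_pos.2 hab)

/-- A closed C² unit-speed curve of length ℓ in ℝ⁴ with both endpoints at the
origin satisfies ∫₀^ℓ |γ''| ≥ 1. -/
theorem arc_length_curve_total_curvature_ge_one
    (γ : ℝ → EuclideanSpace ℝ (Fin 4)) (ℓ : ℝ)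
    (hℓ : 0 < ℓ)
    (hγ : ContDiff ℝ 2 γ)
    (hunit : ∀ t ∈ Set.Icc (0 : ℝ) ℓ, ‖deriv γ t‖ = 1)
    (h0 : γ 0 = 0) (h1 : γ ℓ = 0) :
    1 ≤ ∫ t in (0:ℝ)..ℓ, ‖deriv (deriv γ) t‖ := by
  rw [← hunit 0 ⟨le_rfl, hℓ.le⟩]
  exact hγ.norm_deriv_le_integral_norm_deriv_deriv hℓ (h0.trans h1.symm)
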